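/- arXiv:2410.22232 — 6 statements merged into one kernel-verified Lean document; each statement's English description precedes it below -/
import Mathlib

section
/- For n ≥ 2 and a weakly increasing vector u = (u_0,...,u_{n-1}) of positive integers, a sequence a ∈ ℕ^n is a prime u-parking function if and only if a has an entry less than u_0 and removing any one entry less than u_0 from a yields a u₁-parking function of length n-1, where u₁ = (u_0,...,u_{n-2}). -/
/-- `#{j : a j < t}`. -/
def countLt {n : ℕ} (a : Fin n → ℕ) (t : ℕ) : ℕ :=
  (Finset.univ.filter fun j => a j < t).card

/-- `a` is a `u`-parking function: `#{j : a j < u i} ≥ i + 1` for all `i = 0, …, n-1`. -/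
def IsUPF {n : ℕ} (u : Fin n → ℕ) (a : Fin n → ℕ) : Prop :=
  ∀ i : Fin n, (i : ℕ) + 1 ≤ countLt a (u i)

/-- `a` is a prime `u`-parking function: a `u`-parking function with additionally
`#{j : a j < u i} > i + 1` for all `i = 0, …, n-2`. -/
def IsPrimeUPF {n : ℕ} (u : Fin n → ℕ) (a : Fin n → ℕ) : Prop :=
  IsUPF u a ∧ ∀ i : Fin n, (i : ℕ) + 1 < n → (i : ℕ) + 1 < countLt a (u i)

lemma countLt_succAbove {n : ℕ} (a : Fin (n + 1) → ℕ) (k : Fin (n + 1)) (t : ℕ) :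
    countLt a t = (if a k < t then 1 else 0) + countLt (fun j => a (k.succAbove j)) t := by
  simp only [countLt, Finset.card_filter]
  exact Fin.sum_univ_succAbove (fun i => if a i < t then 1 else 0) k

lemma countLt_mono {n : ℕ} (a : Fin n → ℕ) {t t' : ℕ} (h : t ≤ t') :
    countLt a t ≤ countLt a t' := by
  apply Finset.card_le_card
  intro j hj
  simp only [Finset.mem_filter] at hj ⊢
  exact ⟨hj.1, lt_of_lt_of_le hj.2 h⟩

/-- For `n ≥ 2` and a weakly increasing vector `u` of positive integers, `a` is a prime
`u`-parking function iff `a` has an entry `< u 0` and removing any one entry `< u 0`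
yields a `(u_0, …, u_{n-2})`-parking function of length `n - 1`. -/
theorem stmt1 (n : ℕ) (u : Fin (n + 2) → ℕ) (hu : Monotone u) (hpos : ∀ i, 0 < u i)
    (a : Fin (n + 2) → ℕ) :
    IsPrimeUPF u a ↔
      (∃ k, a k < u 0) ∧
        ∀ k : Fin (n + 2), a k < u 0 →
          IsUPF (fun i : Fin (n + 1) => u i.castSucc)
            (fun j : Fin (n + 1) => a (k.succAbove j)) := by
  constructor
  · rintro ⟨h1, h2⟩
    have hex : ∃ k, a k < u 0 := by
      have := h1 0
      simp only [Fin.val_zero, zero_add] at this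
      obtain ⟨k, hk⟩ := Finset.card_pos.mp (lt_of_lt_of_le one_pos this)
      exact ⟨k, (Finset.mem_filter.mp hk).2⟩
    refine ⟨hex, fun k hk j => ?_⟩
    show (j : ℕ) + 1 ≤ countLt (fun j' => a (k.succAbove j')) (u j.castSucc)
    have hle : a k < u j.castSucc := lt_of_lt_of_le hk (hu (Fin.zero_le _))
    have heq := countLt_succAbove a k (u j.castSucc)
    rw [if_pos hle] at heq
    have hj : ((j.castSucc : Fin (n + 2)) : ℕ) + 1 < n + 2 := by
      rw [Fin.coe_castSucc]; omega
    have h2' := h2 j.castSucc hj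
    rw [Fin.coe_castSucc] at h2'
    omega
  · rintro ⟨⟨k, hk⟩, h2⟩
    have hpf : ∀ m : ℕ, (hm : m < n + 1) → m + 2 ≤ countLt a (u ⟨m, by omega⟩) := by
      intro m hm
      set j : Fin (n + 1) := ⟨m, hm⟩ with hjdef
      have h2' : (j : ℕ) + 1 ≤ countLt (fun j' => a (k.succAbove j')) (u j.castSucc) :=
        h2 k hk j
      have hle : a k < u j.castSucc := lt_of_lt_of_le hk (hu (Fin.zero_le _))
      have heq := countLt_succAbove a k (u j.castSucc)
      rw [if_pos hle] at heq
      have hcast : u j.castSucc = u ⟨m, by omega⟩ := congrArg u (Fin.ext rfl)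
      rw [hcast] at heq h2'
      simp only [hjdef] at h2'
      omega
    constructor
    · intro i
      by_cases hi : (i : ℕ) ≤ n
      · have := hpf (i : ℕ) (by omega)
        have hcast : u ⟨(i : ℕ), by omega⟩ = u i := congrArg u (Fin.ext rfl)
        rw [hcast] at this
        omega
      · have hi' : (i : ℕ) = n + 1 := by omega
        have := hpf n (by omega)
        have hle : (⟨n, by omega⟩ : Fin (n + 2)) ≤ i := by
          simp [Fin.le_def, hi']
        have hm := countLt_mono a (hu hle)
        omega
    · intro i hi
      have := hpf (i : ℕ) (by omega)
      have hcast : u ⟨(i : ℕ), by omega⟩ = u i := congrArg u (Fin.ext rfl)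
      rw [hcast] at this
      omega
end

section
/- Fix n ≥ 1 and a, b ∈ ℕ with a ≥ 1. The number of increasing prime u-parking functions, where u_i = a + b·i for 0 ≤ i ≤ n-1, equals ((a-b)/n)·C(a+(b+1)(n-1), n-1) + (b/n)·C((b+1)(n-1), n-1). -/
/-!
For monotone `f`, `#{j : f j < t} ≥ k + 1` holds iff `f k < t`, so an increasing prime
`u`-parking function is a weakly increasing sequence with `f 0 < a` and `f (i + 1) < a + b i`.
Increasing sequences under given bounds are counted by splitting off the first entry `v` and
shifting the rest down by `v`. If `g m a` counts increasing sequences of length `m` below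
`a, a + b, a + 2b, …` and `S m a = ∑_{w<a} g m (w + 1)` (the number of increasing prime parking
functions of length `m + 1`), this gives `g (m + 1) a = S m (a + b) - S m b`, hence
`S (m + 1) a = ∑_{w<a} (S m (b + w + 1) - S m b)`. The closed form satisfies the same recursion,
by Pascal's rule and the absorption identity `C(y, m+1) (m+1) = C(y, m) (y - m)`, so the sum
telescopes.
-/

open Finset

def boundedChains : List ℕ → ℕ → Finset (List ℕ)
  | [], _ => {[]}
  | c :: cs, lo => (Ico lo c).biUnion fun v => (boundedChains cs v).image (v :: ·)

theorem mem_boundedChains {c l : List ℕ} {lo : ℕ} :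
    l ∈ boundedChains c lo ↔ List.IsChain (· ≤ ·) (lo :: l) ∧ List.Forall₂ (· < ·) l c := by
  induction c generalizing lo l with
  | nil => cases l <;> simp [boundedChains]
  | cons c cs ih =>
    cases l with
    | nil => simp [boundedChains]
    | cons v t =>
      simp only [boundedChains, mem_biUnion, mem_Ico, mem_image, ih, List.cons.injEq,
        exists_eq_right_right, List.isChain_cons_cons, List.forall₂_cons]
      tauto

theorem card_boundedChains_cons (c : ℕ) (cs : List ℕ) (lo : ℕ) :
    #(boundedChains (c :: cs) lo) = ∑ v ∈ Ico lo c, #(boundedChains cs v) := by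
  rw [boundedChains, card_biUnion]
  · exact sum_congr rfl fun v _ => card_image_of_injective _ List.cons_injective
  · intro v _ w _ hvw
    simp only [Function.onFun, disjoint_left, mem_image]
    rintro _ ⟨t, _, rfl⟩ ⟨t', _, h⟩
    exact hvw (List.cons_eq_cons.mp h).1.symm

theorem card_boundedChains_map_add (cs : List ℕ) (t lo : ℕ) :
    #(boundedChains (cs.map (· + t)) (lo + t)) = #(boundedChains cs lo) := by
  induction cs generalizing lo with
  | nil => rfl
  | cons c cs ih =>
    rw [List.map_cons, card_boundedChains_cons, card_boundedChains_cons, ← image_add_right_Ico,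
      sum_image fun _ _ _ _ => Nat.add_right_cancel]
    exact sum_congr rfl fun v _ => ih v

theorem List.forall₂_ofFn_iff {α β : Type*} {R : α → β → Prop} {n : ℕ} {f : Fin n → α}
    {g : Fin n → β} : List.Forall₂ R (List.ofFn f) (List.ofFn g) ↔ ∀ i, R (f i) (g i) := by
  induction n with
  | zero => simp
  | succ n ih => simp [List.ofFn_succ, Fin.forall_fin_succ, ih]

theorem ofFn_mem_boundedChains_zero_iff {n : ℕ} {f c : Fin n → ℕ} :
    List.ofFn f ∈ boundedChains (List.ofFn c) 0 ↔ Monotone f ∧ ∀ i, f i < c i := by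
  rw [mem_boundedChains, List.isChain_cons, List.forall₂_ofFn_iff, ← List.sortedLE_iff_isChain,
    List.sortedLE_ofFn_iff]
  simp

theorem ncard_setOf_monotone_lt {n : ℕ} (c : Fin n → ℕ) :
    {f : Fin n → ℕ | Monotone f ∧ ∀ i, f i < c i}.ncard = #(boundedChains (List.ofFn c) 0) := by
  have hpre : {f : Fin n → ℕ | Monotone f ∧ ∀ i, f i < c i}
      = List.ofFn ⁻¹' ↑(boundedChains (List.ofFn c) 0) := by
    ext f
    exact ofFn_mem_boundedChains_zero_iff.symm
  rw [hpre, Set.ncard_preimage_of_injective_subset_range List.ofFn_injective, Set.ncard_coe_finset]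
  intro l hl
  obtain rfl : n = l.length := by
    simpa using (mem_boundedChains.mp hl).2.length_eq.symm
  exact ⟨l.get, List.ofFn_get l⟩

theorem add_one_le_countLt_iff {n : ℕ} {f : Fin n → ℕ} (hf : Monotone f) (k : Fin n) (t : ℕ) :
    (k : ℕ) + 1 ≤ countLt f t ↔ f k < t := by
  constructor
  · intro h
    by_contra! hk
    have hsub : ({j | f j < t} : Finset (Fin n)) ⊆ Iio k := fun j hj => by
      simp only [mem_filter, mem_univ, true_and, mem_Iio] at hj ⊢
      by_contra! hkj
      exact (hk.trans (hf hkj)).not_gt hj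
    have hcard := card_le_card hsub
    rw [Fin.card_Iio] at hcard
    unfold countLt at h
    omega
  · intro h
    have hsub : Iic k ⊆ ({j | f j < t} : Finset (Fin n)) := fun j hj => by
      simpa using (hf (mem_Iic.mp hj)).trans_lt h
    simpa [countLt] using card_le_card hsub

theorem isPrimeUPF_iff_of_monotone {m : ℕ} {u f : Fin (m + 1) → ℕ} (hu : Monotone u)
    (hf : Monotone f) : IsPrimeUPF u f ↔ f 0 < u 0 ∧ ∀ i : Fin m, f i.succ < u i.castSucc := by
  have hprime : (∀ i : Fin (m + 1), (i : ℕ) + 1 < m + 1 → (i : ℕ) + 1 < countLt f (u i))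
      ↔ ∀ i : Fin m, f i.succ < u i.castSucc := by
    rw [Fin.forall_fin_succ']
    simp [← add_one_le_countLt_iff hf]
  rw [IsPrimeUPF, IsUPF, hprime]
  simp only [add_one_le_countLt_iff hf]
  rw [Fin.forall_fin_succ]
  constructor
  · exact fun ⟨⟨h0, _⟩, hsucc⟩ => ⟨h0, hsucc⟩
  · exact fun ⟨h0, hsucc⟩ => ⟨⟨h0, fun i => (hsucc i).trans_le (hu i.castSucc_le_succ)⟩, hsucc⟩

section LinearBounds

variable (b : ℕ)

def chainCount (m a : ℕ) : ℕ := #(boundedChains (List.ofFn fun i : Fin m => a + b * i) 0)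

theorem chainCount_zero (a : ℕ) : chainCount b 0 a = 1 := rfl

theorem card_boundedChains_cons_ofFn {m a c : ℕ} (hc : c ≤ a) :
    #(boundedChains (c :: List.ofFn fun i : Fin m => a + b * i) 0)
      = ∑ w ∈ range c, chainCount b m (a - c + w + 1) := by
  rw [card_boundedChains_cons, Nat.Ico_zero_eq_range,
    ← sum_range_reflect (fun w => chainCount b m (a - c + w + 1))]
  refine sum_congr rfl fun v hv => ?_
  have hv := mem_range.mp hv
  rw [show a - c + (c - 1 - v) + 1 = a - v by omega, chainCount,
    ← card_boundedChains_map_add _ v 0, List.map_ofFn, zero_add]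
  congr 4 with i
  simp only [Function.comp_apply]
  omega

theorem chainCount_succ (m a : ℕ) :
    chainCount b (m + 1) a = ∑ w ∈ range a, chainCount b m (b + w + 1) := by
  have hcons := card_boundedChains_cons_ofFn b (m := m) (Nat.le_add_right a b)
  simp only [Nat.add_sub_cancel_left] at hcons
  rw [chainCount, List.ofFn_succ, ← hcons]
  simp only [Fin.val_zero, Fin.val_succ, mul_zero, add_zero]
  congr 4 with i
  ring

def chainSum (m a : ℕ) : ℚ := ∑ w ∈ range a, (chainCount b m (w + 1) : ℚ)

theorem chainCount_succ_eq_sub (m a : ℕ) :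
    (chainCount b (m + 1) a : ℚ) = chainSum b m (b + a) - chainSum b m b := by
  rw [chainCount_succ, chainSum, chainSum, sum_range_add]
  push_cast
  ring

def primeCountFormula (m a : ℕ) : ℚ :=
  ((a : ℚ) - b) / (m + 1) * (a + (b + 1) * m).choose m + b / (m + 1) * ((b + 1) * m).choose m

theorem primeCountFormula_zero_left (a : ℕ) : primeCountFormula b 0 a = a := by
  simp [primeCountFormula]

theorem primeCountFormula_zero_right (m : ℕ) : primeCountFormula b m 0 = 0 := by
  rw [primeCountFormula, Nat.cast_zero, zero_add]
  ring

theorem primeCountFormula_succ_sub (m w : ℕ) :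
    primeCountFormula b (m + 1) (w + 1) - primeCountFormula b (m + 1) w
      = primeCountFormula b m (b + w + 1) - primeCountFormula b m b := by
  set y := w + (b + 1) * (m + 1) with hy
  have hpascal : (w + 1 + (b + 1) * (m + 1)).choose (m + 1) = y.choose m + y.choose (m + 1) := by
    rw [show w + 1 + (b + 1) * (m + 1) = y + 1 by ring, Nat.choose_succ_succ']
  have habsorb : (y.choose (m + 1) : ℚ) * (m + 1) = y.choose m * (w + 1 + b * (m + 1)) := by
    have h := Nat.choose_succ_right_eq y m
    rw [Nat.sub_eq_of_eq_add (show y = w + 1 + b * (m + 1) + m by rw [hy]; ring)] at h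
    exact_mod_cast h
  simp only [primeCountFormula, hpascal, show b + w + 1 + (b + 1) * m = y by ring]
  push_cast
  field_simp
  linear_combination habsorb

theorem chainSum_eq_primeCountFormula (m a : ℕ) : chainSum b m a = primeCountFormula b m a := by
  induction m generalizing a with
  | zero => simp [chainSum, chainCount_zero, primeCountFormula_zero_left]
  | succ m ih =>
    calc chainSum b (m + 1) a
        = ∑ w ∈ range a, (primeCountFormula b m (b + w + 1) - primeCountFormula b m b) := by
          rw [chainSum]
          simp only [chainCount_succ_eq_sub, ih, ← add_assoc]
      _ = ∑ w ∈ range a, (primeCountFormula b (m + 1) (w + 1) - primeCountFormula b (m + 1) w) := by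
          simp only [primeCountFormula_succ_sub]
      _ = primeCountFormula b (m + 1) a := by
          rw [sum_range_sub, primeCountFormula_zero_right, sub_zero]

end LinearBounds

theorem stmt3_general (n a b : ℕ) (hn : 1 ≤ n) :
    (({f : Fin n → ℕ | Monotone f ∧
        IsPrimeUPF (fun i : Fin n => a + b * (i : ℕ)) f}.ncard : ℚ))
      = ((a : ℚ) - b) / n * ((a + (b + 1) * (n - 1)).choose (n - 1))
        + (b : ℚ) / n * (((b + 1) * (n - 1)).choose (n - 1)) := by
  obtain ⟨m, rfl⟩ : ∃ m, n = m + 1 := ⟨n - 1, by omega⟩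
  have hu : Monotone fun i : Fin (m + 1) => a + b * (i : ℕ) := fun _ _ hij =>
    Nat.add_le_add_left (Nat.mul_le_mul_left b hij) a
  have hset : {f : Fin (m + 1) → ℕ | Monotone f ∧ IsPrimeUPF (fun i => a + b * (i : ℕ)) f}
      = {f | Monotone f ∧
          ∀ i, f i < (Fin.cons a fun i : Fin m => a + b * (i : ℕ) : Fin (m + 1) → ℕ) i} := by
    ext f
    refine and_congr_right fun hf => ?_
    rw [isPrimeUPF_iff_of_monotone hu hf, Fin.forall_fin_succ]
    simp
  rw [hset, ncard_setOf_monotone_lt, List.ofFn_succ]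
  simp only [Fin.cons_zero, Fin.cons_succ]
  rw [card_boundedChains_cons_ofFn b le_rfl]
  simp only [Nat.sub_self, zero_add]
  push_cast
  rw [← chainSum, chainSum_eq_primeCountFormula, primeCountFormula]

/-- The number of increasing prime `u`-parking functions with `u i = a + b * i` is
`((a-b)/n) C(a+(b+1)(n-1), n-1) + (b/n) C((b+1)(n-1), n-1)`. -/
theorem stmt3 (n a b : ℕ) (hn : 1 ≤ n) (ha : 1 ≤ a) :
    (({f : Fin n → ℕ | Monotone f ∧
        IsPrimeUPF (fun i : Fin n => a + b * (i : ℕ)) f}.ncard : ℚ))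
      = ((a : ℚ) - b) / n * ((a + (b + 1) * (n - 1)).choose (n - 1))
        + (b : ℚ) / n * (((b + 1) * (n - 1)).choose (n - 1)) :=
  stmt3_general n a b hn
end

section
/- Fix n ≥ 1 and a, b ∈ ℕ with a ≥ 1. The number of prime u-parking functions of length n, where u_i = a + b·i for 0 ≤ i ≤ n-1, equals (a-b)·(a+(n-1)b)^{n-1} + b^n·(n-1)^{n-1}. -/
/-!
Prime `u`-parking functions for `u i = a + b i` are exactly the parking functions for the
thresholds `a, a, a + b, …, a + (n - 2) b`. Sorting the parking functions for thresholds `u` by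
the set of `k` entries below `u 0` gives the recursion
`N(u) = ∑ₖ C(n, k) (u 0)ᵏ N(t ↦ u (t + k) - u 0)`: the other `n - k` entries, lowered by `u 0`,
form a parking function for the shifted thresholds. For `u t = c + b t` the recursion and
`∑ₖ k C(m, k) xᵏ yᵐ⁻ᵏ = m x (x + y)ᵐ⁻¹` give the count `c (c + m b)ᵐ⁻¹` by induction on `m`; one
more step of the recursion, multiplied by `n - 1`, turns the prime count into binomial sums.
-/

open Finset

theorem sum_range_mul_pow_mul_pow_mul_choose {R : Type*} [CommSemiring R] (n : ℕ) (x y : R) :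
    ∑ k ∈ range (n + 1), (k : R) * x ^ k * y ^ (n - k) * n.choose k =
      n * x * (x + y) ^ (n - 1) := by
  rcases n with _ | n
  · simp
  rw [sum_range_succ', Nat.cast_zero, zero_mul, zero_mul, zero_mul, add_zero, add_pow, mul_sum]
  refine sum_congr rfl fun k _ => ?_
  have hchoose : ((n + 1).choose (k + 1) : R) * (k + 1) = (n + 1) * n.choose k := by
    exact_mod_cast congrArg (Nat.cast (R := R)) (Nat.add_one_mul_choose_eq n k).symm
  rw [Nat.add_sub_add_right, Nat.add_sub_cancel]
  push_cast
  calc (k + 1 : R) * x ^ (k + 1) * y ^ (n - k) * (n + 1).choose (k + 1)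
      = ((n + 1).choose (k + 1) * (k + 1)) * x ^ (k + 1) * y ^ (n - k) := by ring
    _ = (n + 1) * x * (x ^ k * y ^ (n - k) * n.choose k) := by rw [hchoose]; ring

theorem sum_range_pred_mul_pow_mul_pow_mul_choose {R : Type*} [CommRing R] (n : ℕ) (x y : R) :
    ∑ k ∈ range (n + 1), ((k - 1 : ℕ) : R) * x ^ k * y ^ (n - k) * n.choose k =
      n * x * (x + y) ^ (n - 1) - (x + y) ^ n + y ^ n := by
  have hpred (k : ℕ) : ((k - 1 : ℕ) : R) = k - 1 + if k = 0 then 1 else 0 := by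
    rcases k with _ | k <;> simp
  simp only [hpred, add_mul, sub_mul, one_mul, sum_add_distrib, sum_sub_distrib,
    sum_range_mul_pow_mul_pow_mul_choose, ite_mul, zero_mul, sum_ite_eq', mem_range, ← add_pow]
  simp

namespace UParking

variable {α β : Type*} [Fintype α] [Fintype β]

def countBelow (f : α → ℕ) (t : ℕ) : ℕ := #{j | f j < t}

def IsParking (u : ℕ → ℕ) (f : α → ℕ) : Prop :=
  ∀ i < Fintype.card α, i + 1 ≤ countBelow f (u i)

noncomputable def parkingCount (α : Type*) [Fintype α] (u : ℕ → ℕ) : ℕ :=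
  Nat.card {f : α → ℕ // IsParking u f}

lemma countBelow_mono (f : α → ℕ) : Monotone (countBelow f) := fun _ _ hst =>
  card_le_card fun j => by simp only [mem_filter, mem_univ, true_and]; omega

lemma countBelow_le_card (f : α → ℕ) (t : ℕ) : countBelow f t ≤ Fintype.card α :=
  card_filter_le _ _

lemma countBelow_comp_equiv (e : β ≃ α) (f : α → ℕ) (t : ℕ) :
    countBelow (f ∘ e) t = countBelow f t :=
  card_equiv e (by simp)

lemma IsParking.lt_last {u : ℕ → ℕ} {f : α → ℕ} (hf : IsParking u f) (j : α) :
    f j < u (Fintype.card α - 1) := by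
  have hpos : 0 < Fintype.card α := Fintype.card_pos_iff.mpr ⟨j⟩
  have hcard := hf (Fintype.card α - 1) (by omega)
  rw [Nat.sub_add_cancel hpos] at hcard
  have hall := eq_univ_of_card _ ((countBelow_le_card f _).antisymm hcard)
  simpa using eq_univ_iff_forall.mp hall j

instance (u : ℕ → ℕ) : Finite {f : α → ℕ // IsParking u f} :=
  Finite.of_injective (fun f j => (⟨f.1 j, f.2.lt_last j⟩ : Fin (u (Fintype.card α - 1))))
    fun _ _ hfg => Subtype.ext <| funext fun j => congrArg Fin.val (congrFun hfg j)

lemma parkingCount_of_isEmpty [IsEmpty α] (u : ℕ → ℕ) : parkingCount α u = 1 := by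
  have : Unique {f : α → ℕ // IsParking u f} :=
    ⟨⟨⟨isEmptyElim, fun i hi => by simp at hi⟩⟩, fun f => Subtype.ext (funext isEmptyElim)⟩
  exact Nat.card_unique

lemma parkingCount_eq_zero [Nonempty α] {u : ℕ → ℕ} (h : u 0 = 0) : parkingCount α u = 0 := by
  refine Nat.card_eq_zero.mpr (Or.inl ⟨fun ⟨f, hf⟩ => ?_⟩)
  simpa [countBelow, h] using hf 0 Fintype.card_pos

lemma parkingCount_fin_one (u : ℕ → ℕ) : parkingCount (Fin 1) u = u 0 := by
  have hone (f : Fin 1 → ℕ) : IsParking u f ↔ f 0 < u 0 := by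
    simp [IsParking, countBelow, card_pos, filter_nonempty_iff]
  rw [parkingCount, Nat.card_congr ((Equiv.funUnique (Fin 1) ℕ).subtypeEquiv
    (q := (· < u 0)) hone), ← Nat.card_congr Fin.equivSubtype, Nat.card_fin]

lemma parkingCount_congr (e : α ≃ β) (u : ℕ → ℕ) : parkingCount α u = parkingCount β u :=
  Nat.card_congr <| (e.arrowCongr (Equiv.refl ℕ)).subtypeEquiv fun f => by
    simp only [IsParking, Fintype.card_congr e]
    change _ ↔ ∀ i < _, i + 1 ≤ countBelow (f ∘ e.symm) (u i)
    simp only [countBelow_comp_equiv]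

section Split

variable [DecidableEq α]

lemma countBelow_eq_card_add {f : α → ℕ} {S : Finset α} {c t : ℕ}
    (hS : ∀ j, f j < c ↔ j ∈ S) (hct : c ≤ t) :
    countBelow f t = #S + countBelow (fun j : ↥(Sᶜ : Finset α) => f j - c) (t - c) := by
  have hlow : ∀ j ∈ S, f j < t := fun j hj => ((hS j).mpr hj).trans_le hct
  have hhigh : ∀ j ∈ Sᶜ, (f j < t ↔ f j - c < t - c) := fun j hj => by
    have := (hS j).not.mpr (mem_compl.mp hj)
    omega
  simp only [countBelow, card_filter, ← sum_add_sum_compl S, card_eq_sum_ones S]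
  congr 1
  · exact sum_congr rfl fun j hj => if_pos (hlow j hj)
  · rw [← sum_coe_sort Sᶜ]
    exact sum_congr rfl fun j _ => by simp only [hhigh j j.2]

lemma isParking_iff_shift {u : ℕ → ℕ} (hu : ∀ i, u 0 ≤ u i) {f : α → ℕ} {S : Finset α}
    (hS : ∀ j, f j < u 0 ↔ j ∈ S) :
    IsParking u f ↔
      IsParking (fun t => u (t + #S) - u 0) (fun j : ↥(Sᶜ : Finset α) => f j - u 0) := by
  have hS_le : #S ≤ Fintype.card α := card_le_univ S
  have hsplit i := countBelow_eq_card_add hS (hu i)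
  simp only [IsParking, Fintype.card_coe, card_compl]
  refine ⟨fun h t ht => ?_, fun h i hi => ?_⟩
  · have := hsplit (t + #S) ▸ h (t + #S) (by omega)
    omega
  · rw [hsplit]
    rcases lt_or_ge i #S with hiS | hiS
    · omega
    · have := h (i - #S) (by omega)
      rw [Nat.sub_add_cancel hiS] at this
      omega

def splitBelow (S : Finset α) (c : ℕ) :
    {f : α → ℕ // ∀ j, f j < c ↔ j ∈ S} ≃ (↥(Sᶜ : Finset α) → ℕ) × (↥S → Fin c) where
  toFun f := (fun j => f.1 j - c, fun j => ⟨f.1 j, (f.2 j).mpr j.2⟩)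
  invFun p := ⟨fun j => if h : j ∈ S then p.2 ⟨j, h⟩ else p.1 ⟨j, mem_compl.mpr h⟩ + c,
    fun j => by by_cases h : j ∈ S <;> simp [h]⟩
  left_inv f := Subtype.ext <| funext fun j => by
    by_cases h : j ∈ S
    · simp [h]
    · have := (f.2 j).not.mpr h
      simp only [h, dite_false]
      omega
  right_inv p := by
    ext j
    · simp [mem_compl.mp j.2]
    · simp [j.2]

lemma card_isParking_lowSet_eq {u : ℕ → ℕ} (hu : ∀ i, u 0 ≤ u i) (S : Finset α) :
    Nat.card {f : α → ℕ // IsParking u f ∧ ∀ j, f j < u 0 ↔ j ∈ S} =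
      parkingCount ↥(Sᶜ : Finset α) (fun t => u (t + #S) - u 0) * u 0 ^ #S := by
  let low : (α → ℕ) → Prop := fun f => ∀ j, f j < u 0 ↔ j ∈ S
  calc Nat.card {f : α → ℕ // IsParking u f ∧ low f}
      = Nat.card {f : {f // low f} // IsParking u f.1} :=
        Nat.card_congr ((Equiv.subtypeSubtypeEquivSubtypeInter _ _).trans
          (Equiv.subtypeEquivRight fun _ => and_comm)).symm
    _ = Nat.card {p : (↥(Sᶜ : Finset α) → ℕ) × (↥S → Fin (u 0)) //
          IsParking (fun t => u (t + #S) - u 0) p.1} :=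
        Nat.card_congr ((splitBelow S (u 0)).subtypeEquiv fun f => isParking_iff_shift hu f.2)
    _ = _ := by
      rw [Nat.card_congr Equiv.prodSubtypeFstEquivSubtypeProd, Nat.card_prod, Nat.card_fun]
      simp [parkingCount]

end Split

theorem parkingCount_eq_sum_choose {u : ℕ → ℕ} (hu : ∀ i, u 0 ≤ u i) :
    parkingCount α u = ∑ k ∈ range (Fintype.card α + 1),
      parkingCount (Fin (Fintype.card α - k)) (fun t => u (t + k) - u 0) * u 0 ^ k *
        (Fintype.card α).choose k := by
  classical
  let fiber (S : Finset α) := {f : α → ℕ // IsParking u f ∧ ∀ j, f j < u 0 ↔ j ∈ S}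
  have e : {f : α → ℕ // IsParking u f} ≃ Σ S, fiber S :=
    (Equiv.sigmaFiberEquiv fun f : {f // IsParking u f} =>
        ({j | f.1 j < u 0} : Finset α)).symm.trans
      (Equiv.sigmaCongrRight fun S => (Equiv.subtypeSubtypeEquivSubtypeInter (IsParking u)
        fun f => ({j | f j < u 0} : Finset α) = S).trans
        (Equiv.subtypeEquivRight fun f => by simp [Finset.ext_iff]))
  have (S : Finset α) : Finite (fiber S) :=
    Finite.of_injective (fun f => (⟨f.1, f.2.1⟩ : {f // IsParking u f}))
      fun _ _ hfg => Subtype.ext (Subtype.mk.inj hfg)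
  calc parkingCount α u = ∑ S, Nat.card (fiber S) := by
        rw [parkingCount, Nat.card_congr e, Nat.card_sigma]
    _ = ∑ S ∈ univ.powerset, parkingCount (Fin (Fintype.card α - #S))
          (fun t => u (t + #S) - u 0) * u 0 ^ #S := by
        rw [powerset_univ (α := α)]
        refine sum_congr rfl fun S _ => ?_
        rw [card_isParking_lowSet_eq hu, parkingCount_congr (Fintype.equivFinOfCardEq
          (by simp : Fintype.card ↥(Sᶜ : Finset α) = Fintype.card α - #S))]
    _ = _ := by
        rw [sum_powerset_apply_card fun k =>
          parkingCount (Fin (Fintype.card α - k)) (fun t => u (t + k) - u 0) * u 0 ^ k,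
          card_univ (α := α)]
        simp only [smul_eq_mul, mul_comm]

-- The count formula enters as a hypothesis so that this serves both inside the induction
-- proving `parkingCount_arith` and after it.
lemma mul_parkingCount_shift {m k b : ℕ} (hkm : k ≤ m)
    (h : k < m → parkingCount (Fin (m - k)) (fun t => b * k + b * t) =
      b * k * (b * k + (m - k) * b) ^ (m - k - 1)) :
    m * parkingCount (Fin (m - k)) (fun t => b * k + b * t) = k * (m * b) ^ (m - k) := by
  rcases hkm.lt_or_eq with hkm | rfl
  · obtain ⟨j, rfl⟩ : ∃ j, m = k + j + 1 := ⟨m - k - 1, by omega⟩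
    rw [h hkm, show k + j + 1 - k = j + 1 by omega]
    push_cast
    ring
  · rw [Nat.sub_self, parkingCount_of_isEmpty, pow_zero, mul_one]

theorem parkingCount_arith (b : ℕ) {m : ℕ} (hm : 0 < m) (c : ℕ) :
    parkingCount (Fin m) (fun t => c + b * t) = c * (c + m * b) ^ (m - 1) := by
  induction m using Nat.strong_induction_on generalizing c with
  | _ m ih =>
  have hterm (k : ℕ) (hk : k ∈ range (m + 1)) :
      m * (parkingCount (Fin (m - k)) (fun t => c + b * (t + k) - c) * c ^ k *
        m.choose k) = k * c ^ k * (m * b) ^ (m - k) * m.choose k := by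
    have hshift : (fun t => c + b * (t + k) - c) = fun t => b * k + b * t := by
      funext t
      rw [Nat.add_sub_cancel_left, mul_add, add_comm]
    rw [hshift, ← mul_assoc, ← mul_assoc,
      mul_parkingCount_shift (Nat.lt_succ_iff.mp (mem_range.mp hk))]
    · ring
    intro hkm
    rcases Nat.eq_zero_or_pos k with rfl | hk0
    · have : Nonempty (Fin (m - 0)) := ⟨⟨0, by omega⟩⟩
      simp [parkingCount_eq_zero]
    · exact ih (m - k) (by omega) (by omega) (b * k)
  apply Nat.eq_of_mul_eq_mul_left hm
  have hrec := parkingCount_eq_sum_choose (α := Fin m) (u := fun t => c + b * t) (by simp)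
  rw [Fintype.card_fin] at hrec
  simp only [mul_zero, add_zero] at hrec
  rw [hrec, mul_sum, sum_congr rfl hterm]
  have hsum := sum_range_mul_pow_mul_pow_mul_choose m c (m * b)
  simp only [Nat.cast_id] at hsum
  rw [hsum]
  ring

lemma isPrimeUPF_iff_isParking {n : ℕ} {v : ℕ → ℕ} (hv : Monotone v) (f : Fin n → ℕ) :
    IsPrimeUPF (fun i : Fin n => v i) f ↔ IsParking (fun i => v (i - 1)) f := by
  change (∀ i : Fin n, _ ≤ countBelow f _) ∧ (∀ i : Fin n, _ → _ < countBelow f _) ↔ _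
  simp only [IsParking, Fintype.card_fin]
  refine ⟨fun ⟨hupf, hprime⟩ i hi => ?_, fun h => ⟨fun i => ?_, fun i hi => h (i + 1) hi⟩⟩
  · rcases i with _ | i
    · exact hupf ⟨0, hi⟩
    · exact hprime ⟨i, by omega⟩ hi
  · rcases lt_or_ge (i + 1 : ℕ) n with hi | hi
    · exact (h (i + 1) hi).trans' (by omega)
    · exact (h i i.2).trans (countBelow_mono f (hv (Nat.sub_le _ _)))

lemma mul_parkingCount_pred (a b n : ℕ) :
    n * parkingCount (Fin (n + 1)) (fun i => a + b * (i - 1)) =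
      ∑ k ∈ range (n + 2), (k - 1) * a ^ k * (n * b) ^ (n + 1 - k) * (n + 1).choose k := by
  have hrec := parkingCount_eq_sum_choose (α := Fin (n + 1))
    (u := fun i => a + b * (i - 1)) (by simp)
  rw [Fintype.card_fin] at hrec
  simp only [zero_tsub, mul_zero, add_zero] at hrec
  rw [hrec, mul_sum]
  refine sum_congr rfl fun k hk => ?_
  rcases k with _ | k
  · have : Nonempty (Fin (n + 1 - 0)) := ⟨⟨0, by omega⟩⟩
    simp [parkingCount_eq_zero]
  · have hshift : (fun t => a + b * (t + (k + 1) - 1) - a) = fun t => b * k + b * t := by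
      funext t
      rw [Nat.add_sub_cancel_left, Nat.add_sub_assoc (by omega), Nat.add_sub_cancel, mul_add,
        add_comm]
    have hk : k ≤ n := by simp at hk; omega
    rw [hshift, Nat.add_sub_cancel, Nat.add_sub_add_right, ← mul_assoc, ← mul_assoc,
      mul_parkingCount_shift hk fun hkn => parkingCount_arith b (by omega) (b * k)]
    ring

end UParking

open UParking in
theorem stmt4_general (n a b : ℕ) (hn : 1 ≤ n) :
    (({f : Fin n → ℕ | IsPrimeUPF (fun i : Fin n => a + b * (i : ℕ)) f}.ncard : ℤ))
      = ((a : ℤ) - b) * ((a : ℤ) + ((n : ℤ) - 1) * b) ^ (n - 1)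
        + (b : ℤ) ^ n * ((n : ℤ) - 1) ^ (n - 1) := by
  have hmono : Monotone fun i => a + b * i := fun _ _ hij => by dsimp only; gcongr
  rw [← Nat.card_coe_set_eq, Set.coe_ofPred, Nat.card_congr (Equiv.subtypeEquivRight
    (isPrimeUPF_iff_isParking hmono))]
  change (parkingCount (Fin n) (fun i => a + b * (i - 1)) : ℤ) = _
  obtain ⟨m, rfl⟩ : ∃ m, n = m + 1 := ⟨n - 1, by omega⟩
  push_cast
  simp only [add_sub_cancel_right]
  rcases Nat.eq_zero_or_pos m with rfl | hm
  · simp [parkingCount_fin_one]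
  · have hmul : (m : ℤ) * parkingCount (Fin (m + 1)) (fun i => a + b * (i - 1)) =
        ∑ k ∈ range (m + 2), ((k - 1 : ℕ) : ℤ) * a ^ k * (m * b) ^ (m + 1 - k) *
          (m + 1).choose k := by
      exact_mod_cast mul_parkingCount_pred a b m
    rw [sum_range_pred_mul_pow_mul_pow_mul_choose, Nat.add_sub_cancel] at hmul
    refine mul_left_cancel₀ (Nat.cast_ne_zero.mpr hm.ne' : (m : ℤ) ≠ 0) ?_
    push_cast at hmul
    linear_combination hmul

/-- The number of prime `u`-parking functions of length `n` with `u i = a + b * i` is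
`(a-b)(a+(n-1)b)^{n-1} + b^n (n-1)^{n-1}` (as an integer). -/
theorem stmt4 (n a b : ℕ) (hn : 1 ≤ n) (ha : 1 ≤ a) :
    (({f : Fin n → ℕ | IsPrimeUPF (fun i : Fin n => a + b * (i : ℕ)) f}.ncard : ℤ))
      = ((a : ℤ) - b) * ((a : ℤ) + ((n : ℤ) - 1) * b) ^ (n - 1)
        + (b : ℤ) ^ n * ((n : ℤ) - 1) ^ (n - 1) :=
  stmt4_general n a b hn
end

section
/- For n ≥ 1, the number of prime parking functions of length n is (n-1)^{n-1}, where 0^0 = 1. -/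
/-!
For `n = m + 1 ≥ 2` the prime condition implies the parking condition and forces every entry
below `m`, so one counts maps `b : Fin (m + 1) → ZMod m` whose values, read in `{0, …, m - 1}`,
satisfy the prime condition. Translating all entries by `c : ZMod m` permutes the `m ^ (m + 1)`
such maps, and each orbit contains exactly one prime sequence (the cycle lemma): the shifted
sequence is prime exactly when the walk `k ↦ #{j | b j ∈ {0, …, k - 1} mod m} - k`, which rises by
one per period because there are `m + 1` entries, stays strictly above its value at the shift for a
full period. Hence there are `m ^ (m + 1) / m = m ^ m` of them.
-/

/-- `#{j : a j ≤ t}`. -/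
def countLe {n : ℕ} (a : Fin n → ℕ) (t : ℕ) : ℕ :=
  (Finset.univ.filter fun j => a j ≤ t).card

/-- The `i`-th order statistic of `a` (`0`-indexed): the `i`-th entry of the weakly
increasing rearrangement of `a`. -/
noncomputable def orderStat {n : ℕ} (a : Fin n → ℕ) (i : Fin n) : ℕ :=
  sInf {t : ℕ | (i : ℕ) + 1 ≤ countLe a t}

open Finset

section CountLe

variable {n : ℕ} (a : Fin n → ℕ)

lemma countLe_mono : Monotone (countLe a) := fun _ _ hst =>
  card_le_card fun _ hj => by
    simp only [mem_filter] at hj ⊢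
    exact ⟨hj.1, hj.2.trans hst⟩

lemma countLe_le (t : ℕ) : countLe a t ≤ n :=
  (card_filter_le _ _).trans_eq (card_fin n)

lemma le_countLe_iff (t : ℕ) : n ≤ countLe a t ↔ ∀ j, a j ≤ t := by
  have h := card_filter_eq_iff (s := univ) (p := fun j => a j ≤ t)
  simp only [card_univ, Fintype.card_fin, mem_univ, true_implies] at h
  rw [← h, countLe]
  exact ⟨fun h' => le_antisymm (countLe_le a t) h', ge_of_eq⟩

lemma orderStat_le_iff (i : Fin n) (t : ℕ) : orderStat a i ≤ t ↔ (i : ℕ) + 1 ≤ countLe a t := by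
  refine ⟨fun h => ?_, fun h => Nat.sInf_le h⟩
  have hne : {t : ℕ | (i : ℕ) + 1 ≤ countLe a t}.Nonempty :=
    ⟨univ.sup a, (le_countLe_iff a _).mpr (fun j => le_sup (mem_univ j)) |>.trans' i.isLt⟩
  exact (Nat.sInf_mem hne).trans (countLe_mono a h)

lemma countLe_eq_sum (t : ℕ) : countLe a t = ∑ v ∈ range (t + 1), #{j | a j = v} := by
  rw [countLe, card_eq_sum_card_fiberwise (f := a) (t := range (t + 1))
    fun j hj => by simpa [Nat.lt_succ_iff] using hj]
  refine sum_congr rfl fun v hv => congrArg card ?_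
  ext j
  simp only [mem_filter, mem_univ, true_and, and_iff_right_iff_imp]
  rintro rfl
  simpa [Nat.lt_succ_iff] using hv

end CountLe

-- The inequalities defining prime parking functions.
def IsOverfull {n : ℕ} (a : Fin n → ℕ) : Prop :=
  ∀ i : ℕ, i + 1 < n → i + 1 < countLe a i

namespace IsOverfull

variable {m : ℕ} {a : Fin (m + 1) → ℕ}

lemma lt (hm : 0 < m) (ha : IsOverfull a) (j : Fin (m + 1)) : a j < m := by
  have hcount := ha (m - 1) (by omega)
  have := (le_countLe_iff a (m - 1)).mp (by omega) j
  omega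

lemma orderStat_le (hm : 0 < m) (ha : IsOverfull a) (i : Fin (m + 1)) :
    orderStat a i ≤ i := by
  rw [orderStat_le_iff]
  by_cases hi : (i : ℕ) < m
  · exact (ha i (by omega)).le
  · exact i.isLt.trans_le ((le_countLe_iff a i).mpr fun j => (ha.lt hm j).le.trans (by omega))

end IsOverfull

def StaysAbove (S : ℕ → ℤ) (m p : ℕ) : Prop :=
  ∀ s, 0 < s → s ≤ m → S p < S (p + s)

section CycleLemma

variable {S : ℕ → ℤ} {m : ℕ}

lemma StaysAbove.unique (hS : ∀ k, S (k + m) = S k + 1) {p q : ℕ} (hp : StaysAbove S m p)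
    (hq : StaysAbove S m q) (hpm : p < m) (hqm : q < m) : p = q := by
  wlog hpq : p ≤ q generalizing p q
  · exact (this hq hp hqm hpm (by omega)).symm
  by_contra hne
  have h₁ := hp (q - p) (by omega) (by omega)
  have h₂ := hq (p + m - q) (by omega) (by omega)
  rw [Nat.add_sub_cancel' hpq] at h₁
  rw [show q + (p + m - q) = p + m by omega, hS] at h₂
  omega

/-- The cycle lemma. The last minimum of `S` on `[0, m)` is the starting point. -/
theorem existsUnique_staysAbove (hm : 0 < m) (hS : ∀ k, S (k + m) = S k + 1) :
    ∃! p, p < m ∧ StaysAbove S m p := by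
  obtain ⟨q₀, hq₀, hmin⟩ := (range m).exists_min_image S (nonempty_range_iff.mpr hm.ne')
  obtain ⟨p, hpA, hpmax⟩ :=
    ((range m).filter (S · = S q₀)).exists_max_image id ⟨q₀, by simp [hq₀]⟩
  simp only [mem_filter, mem_range, id] at hpA hpmax
  have hmin' : ∀ k < m, S p ≤ S k := fun k hk => hpA.2 ▸ hmin k (mem_range.mpr hk)
  have hp : StaysAbove S m p := by
    intro s hs hsm
    by_cases hpsm : p + s < m
    · refine (hmin' _ hpsm).lt_of_ne fun heq => ?_
      have := hpmax (p + s) ⟨hpsm, heq ▸ hpA.2⟩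
      omega
    · have := hS (p + s - m)
      rw [Nat.sub_add_cancel (by omega)] at this
      linarith [hmin' (p + s - m) (by omega)]
  exact ⟨p, ⟨hpA.1, hp⟩, fun q hq => (hp.unique hS hq.2 hpA.1 hq.1).symm⟩

end CycleLemma

section Walk

variable {m : ℕ} (b : Fin (m + 1) → ZMod m)

def fiberCard (k : ℕ) : ℕ := #{j | b j = k}

def walk (k : ℕ) : ℤ := ∑ i ∈ range k, ((fiberCard b i : ℤ) - 1)

lemma walk_add (q s : ℕ) :
    walk b (q + s) = walk b q + ∑ v ∈ range s, ((fiberCard b (q + v) : ℤ) - 1) :=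
  sum_range_add _ q s

variable [NeZero m]

lemma card_val_sub_eq (q v : ℕ) (hv : v < m) : #{j | (b j - q).val = v} = fiberCard b (q + v) := by
  refine congrArg card (filter_congr fun j _ => ?_)
  rw [Nat.cast_add, ← sub_eq_iff_eq_add', ← (ZMod.val_injective m).eq_iff,
    ZMod.val_natCast_of_lt hv]

lemma sum_fiberCard_period (q : ℕ) : ∑ v ∈ range m, fiberCard b (q + v) = m + 1 := by
  rw [← sum_congr rfl fun v hv => card_val_sub_eq b q v (mem_range.mp hv),
    ← card_eq_sum_card_fiberwise fun j _ => mem_range.mpr (ZMod.val_lt _)]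
  simp

lemma walk_add_period (k : ℕ) : walk b (k + m) = walk b k + 1 := by
  rw [walk_add, sum_sub_distrib, ← Nat.cast_sum, sum_fiberCard_period]
  simp

lemma countLe_val_sub (q i : ℕ) (hi : i < m) :
    countLe (fun j => (b j - q).val) i = ∑ v ∈ range (i + 1), fiberCard b (q + v) := by
  rw [countLe_eq_sum]
  exact sum_congr rfl fun v hv => card_val_sub_eq b q v (by rw [mem_range] at hv; omega)

lemma isOverfull_val_sub_iff (q : ℕ) :
    IsOverfull (fun j => (b j - q).val) ↔ StaysAbove (walk b) m q := by
  have key : ∀ i < m, i + 1 < countLe (fun j => (b j - q).val) i ↔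
      walk b q < walk b (q + (i + 1)) := fun i hi => by
    rw [countLe_val_sub b q i hi, walk_add, sum_sub_distrib, ← Nat.cast_sum]
    simp only [sum_const, card_range, nsmul_eq_mul, mul_one]
    omega
  refine ⟨fun h s hs hsm => ?_, fun h i hi => (key i (by omega)).mpr (h _ (by omega) (by omega))⟩
  obtain ⟨i, rfl⟩ := Nat.exists_eq_add_one_of_ne_zero hs.ne'
  exact (key i (by omega)).mp (h i (by omega))

lemma existsUnique_isOverfull_val_sub : ∃! c : ZMod m, IsOverfull (fun j => (b j - c).val) := by
  obtain ⟨p, ⟨-, hp⟩, hpuniq⟩ :=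
    existsUnique_staysAbove (Nat.pos_of_neZero m) (walk_add_period b)
  refine ⟨p, (isOverfull_val_sub_iff b p).mpr hp, fun c hc => ?_⟩
  rw [← ZMod.natCast_zmod_val c] at hc ⊢
  rw [hpuniq c.val ⟨ZMod.val_lt c, (isOverfull_val_sub_iff b c.val).mp hc⟩]

end Walk

lemma card_mul_ncard_of_existsUnique_vadd {G X : Type*} [AddGroup G] [AddAction G X] {T : Set X}
    (hT : ∀ x, ∃! g : G, -g +ᵥ x ∈ T) : Nat.card G * T.ncard = Nat.card X := by
  rw [← Nat.card_coe_set_eq, ← Nat.card_prod]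
  refine Nat.card_eq_of_bijective (fun gt : G × T => gt.1 +ᵥ (gt.2 : X)) ⟨?_, fun x => ?_⟩
  · rintro ⟨g, t, ht⟩ ⟨g', t', ht'⟩ (h : g +ᵥ t = g' +ᵥ t')
    obtain ⟨g₀, -, huniq⟩ := hT (g +ᵥ t)
    obtain rfl : g = g' := by
      rw [huniq g (show -g +ᵥ (g +ᵥ t) ∈ T by rwa [neg_vadd_vadd]),
        huniq g' (show -g' +ᵥ (g +ᵥ t) ∈ T by rwa [h, neg_vadd_vadd])]
    simp [AddAction.injective g h]
  · obtain ⟨g, hg, -⟩ := hT x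
    exact ⟨(g, ⟨_, hg⟩), vadd_neg_vadd g x⟩

lemma ncard_isOverfull_val {m : ℕ} [NeZero m] :
    {b : Fin (m + 1) → ZMod m | IsOverfull fun j => (b j).val}.ncard = m ^ m := by
  have h := card_mul_ncard_of_existsUnique_vadd (G := ZMod m)
    (T := {b : Fin (m + 1) → ZMod m | IsOverfull fun j => (b j).val}) fun b => by
      simpa only [Set.mem_ofPred_eq, Pi.vadd_apply, vadd_eq_add, neg_add_eq_sub]
        using existsUnique_isOverfull_val_sub b
  rw [Nat.card_zmod, Nat.card_fun, Nat.card_zmod, Nat.card_eq_fintype_card, Fintype.card_fin,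
    pow_succ'] at h
  exact Nat.eq_of_mul_eq_mul_left (Nat.pos_of_neZero m) h

lemma ncard_isOverfull {m : ℕ} (hm : 0 < m) :
    {a : Fin (m + 1) → ℕ | IsOverfull a}.ncard = m ^ m := by
  have : NeZero m := ⟨hm.ne'⟩
  rw [← ncard_isOverfull_val, ← Set.ncard_image_of_injective _ (ZMod.val_injective m).comp_left]
  congr 1
  ext a
  refine ⟨fun ha => ?_, fun ⟨b, hb, hba⟩ => hba ▸ hb⟩
  have hval : (fun j => ((a j : ZMod m)).val) = a :=
    funext fun j => ZMod.val_natCast_of_lt (ha.lt hm j)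
  exact ⟨fun j => a j, by rwa [Set.mem_ofPred_eq, hval], hval⟩

/-- For `n ≥ 1`, the number of prime parking functions of length `n` is `(n-1)^(n-1)`
(with `0^0 = 1`). A prime parking function is a sequence whose weakly increasing
rearrangement satisfies `a_(i) ≤ i` for all `i`, and with
`#{j : a j ≤ i} > i + 1` for `i = 0, …, n-2`. -/
theorem stmt5 (n : ℕ) (hn : 1 ≤ n) :
    {a : Fin n → ℕ |
        (∀ i : Fin n, orderStat a i ≤ (i : ℕ)) ∧
          ∀ i : ℕ, i + 1 < n → i + 1 < countLe a i}.ncard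
      = (n - 1) ^ (n - 1) := by
  obtain ⟨m, rfl⟩ := Nat.exists_eq_add_of_le' hn
  rw [Nat.add_sub_cancel]
  rcases Nat.eq_zero_or_pos m with rfl | hm
  · rw [pow_zero, Set.ncard_eq_one]
    refine ⟨0, Set.ext fun a => ?_⟩
    simp only [Set.mem_ofPred_eq, orderStat_le_iff, zero_add]
    simp [le_countLe_iff, funext_iff]
  · rw [← ncard_isOverfull hm]
    congr 1
    ext a
    exact and_iff_right_of_imp (IsOverfull.orderStat_le hm)
end

section
/- For integers a ≥ 1, b ≥ 0 and n ≥ 1, setting K = (n−1)(b+1), the following identity holds in ℚ: ∑_{i=0}^{a-1} [ C(K+a−i, n−1) − (K/(n−1))·C(K+a−i−1, n−2) ] = ((a−b)/n)·C(K+a, n−1) + (b/n)·C(K, n−1), where for n = 1 the term K/(n−1)·C(...) is 0 (since K = 0). -/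
lemma aux15 (b n : ℕ) (hn : 1 ≤ n) (a : ℕ) :
    ∑ i ∈ Finset.range a,
        ((((n - 1) * (b + 1) + i + 1).choose (n - 1) : ℚ)
          - (((n - 1) * (b + 1) : ℕ) : ℚ) / ((n : ℚ) - 1)
              * (((n - 1) * (b + 1) + i).choose (n - 2) : ℚ))
      = ((a : ℚ) - b) / n * (((n - 1) * (b + 1) + a).choose (n - 1) : ℚ)
        + (b : ℚ) / n * (((n - 1) * (b + 1)).choose (n - 1) : ℚ) := by
  match n, hn with
  | 1, _ =>
    simp only [Nat.sub_self, Nat.zero_mul, Nat.zero_add, Nat.choose_zero_right]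
    induction a with
    | zero => simp
    | succ a ih =>
      rw [Finset.sum_range_succ, ih]
      push_cast
      simp
  | (m+2), _ =>
    induction a with
    | zero => push_cast; ring
    | succ a ih =>
      rw [Finset.sum_range_succ, ih]
      have hm1 : (m + 2 : ℕ) - 1 = m + 1 := rfl
      have hm2 : (m + 2 : ℕ) - 2 = m := rfl
      rw [hm1, hm2]
      set K := (m + 1) * (b + 1) with hK
      clear_value K
      have h1 : (K + (a + 1)).choose (m + 1)
          = (K + a).choose m + (K + a).choose (m + 1) := by
        rw [show K + (a+1) = (K + a) + 1 by ring]
        exact Nat.choose_succ_succ _ _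
      have h2 : (K + a).choose (m + 1) * (m + 1) = (K + a).choose m * (K + a - m) :=
        Nat.choose_succ_right_eq _ _
      have hsub : K + a - m = (m + 1) * b + a + 1 := by
        have : K = (m+1)*b + m + 1 := by rw [hK]; ring
        omega
      rw [hsub] at h2
      have h2' : ((K + a).choose (m + 1) : ℚ) * (m + 1)
          = ((K + a).choose m : ℚ) * ((m + 1) * b + a + 1) := by
        exact_mod_cast h2
      have hKQ : ((K : ℕ) : ℚ) = ((m : ℚ) + 1) * (b + 1) := by rw [hK]; push_cast; ring
      have hmQ : ((m : ℚ) + 1) ≠ 0 := by positivity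
      have hnQ : ((m : ℚ) + 2) ≠ 0 := by positivity
      have h1' : (((K + a + 1).choose (m + 1) : ℕ) : ℚ)
          = ((K + a).choose m : ℚ) + ((K + a).choose (m + 1) : ℚ) := by
        rw [show K + a + 1 = K + (a+1) by ring, h1]; push_cast; ring
      rw [show K + (a + 1) = K + a + 1 by omega]
      push_cast [hKQ]
      have h3 : (((m:ℚ)+1)*((b:ℚ)+1)) / (((m:ℚ)+2) - 1) = (b : ℚ) + 1 := by
        rw [show ((m:ℚ)+2) - 1 = (m:ℚ)+1 by ring]
        field_simp
      rw [h3]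
      rw [h1']
      field_simp
      linear_combination h2'

/-- For `a ≥ 1`, `b ≥ 0`, `n ≥ 1`, with `K = (n−1)(b+1)`, the identity in `ℚ`:
`∑_{i=0}^{a-1} [ C(K+a−i, n−1) − (K/(n−1)) C(K+a−i−1, n−2) ]
  = ((a−b)/n) C(K+a, n−1) + (b/n) C(K, n−1)`,
where for `n = 1` the term `K/(n−1)·C(...)` is `0` (here `K = 0` and division by
zero yields `0` in `ℚ`). -/
theorem stmt15 (a b n : ℕ) (ha : 1 ≤ a) (hn : 1 ≤ n) :
    ∑ i ∈ Finset.range a,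
        ((((n - 1) * (b + 1) + a - i).choose (n - 1) : ℚ)
          - (((n - 1) * (b + 1) : ℕ) : ℚ) / ((n : ℚ) - 1)
              * (((n - 1) * (b + 1) + a - i - 1).choose (n - 2) : ℚ))
      = ((a : ℚ) - b) / n * (((n - 1) * (b + 1) + a).choose (n - 1) : ℚ)
        + (b : ℚ) / n * (((n - 1) * (b + 1)).choose (n - 1) : ℚ) := by
  rw [show (∑ i ∈ Finset.range a,
        ((((n - 1) * (b + 1) + a - i).choose (n - 1) : ℚ)
          - (((n - 1) * (b + 1) : ℕ) : ℚ) / ((n : ℚ) - 1)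
              * (((n - 1) * (b + 1) + a - i - 1).choose (n - 2) : ℚ)))
      = ∑ i ∈ Finset.range a,
        ((((n - 1) * (b + 1) + i + 1).choose (n - 1) : ℚ)
          - (((n - 1) * (b + 1) : ℕ) : ℚ) / ((n : ℚ) - 1)
              * (((n - 1) * (b + 1) + i).choose (n - 2) : ℚ)) from ?_, aux15 b n hn a]
  rw [← Finset.sum_range_reflect]
  apply Finset.sum_congr rfl
  intro i hi
  have hi' : i < a := Finset.mem_range.mp hi
  have e1 : (n-1)*(b+1) + a - (a-1-i) = (n-1)*(b+1) + i + 1 := by omega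
  have e2 : (n-1)*(b+1) + a - (a-1-i) - 1 = (n-1)*(b+1) + i := by omega
  rw [e1]
  simp
end

section
/- For p, q ≥ 1, the number of pairs of non-intersecting monotone lattice paths, one from (1,0) to (p, q−1) and one from (0,1) to (p−1, q) (using unit north and east steps, with no common lattice point), equals C(p+q−2, q−1)² − C(p+q−2, q)·C(p+q−2, p), which equals (1/(p+q−1))·C(p+q−1, p−1)·C(p+q−1, q−1). -/
/-!
Lindström–Gessel–Viennot for two paths. Write `s` for the path from `(1,0)` and `t` for the
path from `(0,1)`. After `k` steps both paths lie on the antidiagonal `x + y = k + 1`, so they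
share a point exactly when they are at the same point after the same number of steps. Swapping
the tails of `s` and `t` after their first common point is an involution on intersecting pairs
that exchanges the endpoints. Hence intersecting pairs ending at `(p, q-1)` and `(p-1, q)`
correspond to pairs ending at `(p-1, q)` and `(p, q-1)`, and every such pair must intersect. This
gives `C(p+q-2, q-1)² - C(p+q-2, q)·C(p+q-2, p)`, and the Narayana form follows by rewriting each
binomial coefficient as a rational multiple of `C(p+q-2, q-1)`.
-/

/-- The lattice points visited by a monotone lattice path starting at `st`,
where `true` is a unit north step and `false` is a unit east step. -/
def stepPoints : ℕ × ℕ → List Bool → List (ℕ × ℕ)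
  | st, [] => [st]
  | st, step :: rest =>
      st :: stepPoints (if step then (st.1, st.2 + 1) else (st.1 + 1, st.2)) rest

open Finset in
theorem List.count_ofFn {α : Type*} [DecidableEq α] {n : ℕ} (f : Fin n → α) (a : α) :
    (List.ofFn f).count a = #{i | f i = a} := by
  induction n with
  | zero => simp
  | succ n ih =>
    rw [List.ofFn_succ, List.count_cons, ih, Finset.card_filter, Finset.card_filter,
      Fin.sum_univ_succ]
    by_cases h : f 0 = a <;> simp [h, add_comm]

theorem List.count_take_add_count_drop {α : Type*} [BEq α] (l : List α) (a : α) (k : ℕ) :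
    (l.take k).count a + (l.drop k).count a = l.count a := by
  rw [← List.count_append, List.take_append_drop]

theorem List.monotone_count_take {α : Type*} [BEq α] (l : List α) (a : α) :
    Monotone fun k => (l.take k).count a :=
  fun _ _ h => (List.take_sublist_take_left h).count_le a

theorem List.count_take_add_one_le {α : Type*} [BEq α] (l : List α) (a : α) (k : ℕ) :
    (l.take (k + 1)).count a ≤ (l.take k).count a + 1 := by
  rw [List.take_add_one, List.count_append]
  have : (l[k]?).toList.count a ≤ 1 := List.count_le_length.trans (by cases l[k]? <;> simp)
  omega

theorem Nat.exists_eq_of_monotone_of_le_add_one {f g : ℕ → ℕ} (hf : Monotone f)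
    (hg : ∀ k, g (k + 1) ≤ g k + 1) (h₀ : g 0 ≤ f 0) {n : ℕ} (hn : f n ≤ g n) :
    ∃ k ≤ n, f k = g k := by
  induction n with
  | zero => exact ⟨0, le_rfl, le_antisymm hn h₀⟩
  | succ n ih =>
    by_cases h : f n ≤ g n
    · obtain ⟨k, hk, hfg⟩ := ih h
      exact ⟨k, by omega, hfg⟩
    · exact ⟨n + 1, le_rfl, le_antisymm hn (by linarith [hg n, hf n.le_succ])⟩

namespace LatticePath

open Finset

theorem mem_stepPoints {pt st : ℕ × ℕ} {s : List Bool} :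
    pt ∈ stepPoints st s ↔
      ∃ k ≤ s.length, st + ((s.take k).count false, (s.take k).count true) = pt := by
  induction s generalizing st with
  | nil => simp [stepPoints, Prod.ext_iff, eq_comm]
  | cons b rest ih =>
    simp only [stepPoints, List.mem_cons, ih, List.length_cons]
    constructor
    · rintro (rfl | ⟨k, hk, rfl⟩)
      · exact ⟨0, by simp⟩
      · refine ⟨k + 1, by omega, ?_⟩
        cases b <;> simp [Prod.ext_iff] <;> omega
    · rintro ⟨_ | k, hk, rfl⟩
      · simp
      · refine Or.inr ⟨k, by omega, ?_⟩
        cases b <;> simp [Prod.ext_iff] <;> omega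

def paths (a b : ℕ) : Set (List Bool) := {l | l.count false = a ∧ l.count true = b}

theorem length_of_mem_paths {a b : ℕ} {l : List Bool} (hl : l ∈ paths a b) :
    l.length = a + b := by
  rw [← l.count_false_add_count_true, hl.1, hl.2]

theorem length_eq_length_of_mem_paths_prod {a₁ b₁ a₂ b₂ : ℕ} {p : List Bool × List Bool}
    (hp : p ∈ paths a₁ b₁ ×ˢ paths a₂ b₂) (hab : a₁ + b₁ = a₂ + b₂) :
    p.1.length = p.2.length := by
  rw [length_of_mem_paths hp.1, length_of_mem_paths hp.2, hab]

theorem paths_eq_range (a b : ℕ) :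
    paths a b = Set.range fun s : {s : Finset (Fin (a + b)) // #s = b} =>
      List.ofFn fun i => decide (i ∈ s.1) := by
  ext l
  constructor
  · rintro ⟨hf, ht⟩
    have hlen : l.length = a + b := by rw [← l.count_false_add_count_true, hf, ht]
    have hofFn : (List.ofFn fun i : Fin (a + b) => l[i.cast hlen.symm]) = l :=
      List.ext_getElem (by simp [hlen]) (by simp)
    refine ⟨⟨({i | l[i.cast hlen.symm] = true} : Finset _), ?_⟩, ?_⟩
    · rw [← List.count_ofFn, hofFn, ht]
    · simpa using hofFn
  · rintro ⟨s, rfl⟩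
    dsimp only
    have ht : (List.ofFn fun i => decide (i ∈ s.1)).count true = b := by
      rw [List.count_ofFn]; simpa using s.2
    have hlen := (List.ofFn fun i => decide (i ∈ s.1)).count_false_add_count_true
    rw [List.length_ofFn, ht] at hlen
    exact ⟨by omega, ht⟩

theorem ncard_paths (a b : ℕ) : (paths a b).ncard = (a + b).choose b := by
  rw [paths_eq_range, ← Set.image_univ, Set.ncard_image_of_injective, Set.ncard_univ,
    Nat.card_eq_fintype_card, Fintype.card_finset_len, Fintype.card_fin]
  intro s t h
  ext i
  simpa using congrFun (List.ofFn_injective h) i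

theorem paths_finite (a b : ℕ) : (paths a b).Finite := by
  rw [paths_eq_range]; exact Set.finite_range _

/-- The path `p.1` from `(1,0)` and the path `p.2` from `(0,1)` are at the same point after
`k` steps; for paths of equal length equality of the `x`-coordinates suffices. -/
def MeetsAt (p : List Bool × List Bool) (k : ℕ) : Prop :=
  k ≤ p.1.length ∧ (p.1.take k).count false + 1 = (p.2.take k).count false

instance (p : List Bool × List Bool) : DecidablePred (MeetsAt p) :=
  fun _ => inferInstanceAs (Decidable (_ ∧ _))

def Meets (p : List Bool × List Bool) : Prop := ∃ k, MeetsAt p k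

theorem MeetsAt.count_true {p : List Bool × List Bool} {k : ℕ} (h : MeetsAt p k)
    (hlen : p.1.length = p.2.length) :
    (p.1.take k).count true = (p.2.take k).count true + 1 := by
  have h₁ := (p.1.take k).count_false_add_count_true
  have h₂ := (p.2.take k).count_false_add_count_true
  simp only [List.length_take] at h₁ h₂
  have := h.1
  have := h.2
  omega

theorem exists_mem_stepPoints_iff_meets {p : List Bool × List Bool}
    (hlen : p.1.length = p.2.length) :
    (∃ pt, pt ∈ stepPoints (1, 0) p.1 ∧ pt ∈ stepPoints (0, 1) p.2) ↔ Meets p := by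
  simp only [mem_stepPoints]
  constructor
  · rintro ⟨_, ⟨i, hi, rfl⟩, j, hj, hij⟩
    have h₁ := (p.1.take i).count_false_add_count_true
    have h₂ := (p.2.take j).count_false_add_count_true
    simp only [List.length_take, Prod.ext_iff, Prod.fst_add, Prod.snd_add] at h₁ h₂ hij
    obtain rfl : i = j := by omega
    exact ⟨i, hi, by omega⟩
  · rintro ⟨k, hk⟩
    refine ⟨_, ⟨k, hk.1, rfl⟩, k, hlen ▸ hk.1, ?_⟩
    have := hk.2
    have := hk.count_true hlen
    ext <;> simp <;> omega

theorem Meets.one_le_count {p : List Bool × List Bool} (h : Meets p)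
    (hlen : p.1.length = p.2.length) : 1 ≤ p.2.count false ∧ 1 ≤ p.1.count true := by
  obtain ⟨k, hk⟩ := h
  have := hk.count_true hlen
  have := hk.2
  have := List.count_take_add_count_drop p.1 true k
  have := List.count_take_add_count_drop p.2 false k
  omega

/-- A discrete intermediate value argument: `p.1` starts one unit to the right of `p.2`, does not
end to its right, and `p.2` moves right by at most one unit per step. -/
theorem meets_of_mem_paths_prod {a₁ b₁ a₂ b₂ : ℕ} {p : List Bool × List Bool}
    (hp : p ∈ paths a₁ b₁ ×ˢ paths a₂ b₂) (hab : a₁ + b₁ = a₂ + b₂) (ha : a₁ < a₂) :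
    Meets p := by
  have hlen := length_eq_length_of_mem_paths_prod hp hab
  obtain ⟨k, hk, hmeet⟩ := Nat.exists_eq_of_monotone_of_le_add_one
    (f := fun k => (p.1.take k).count false + 1) (g := fun k => (p.2.take k).count false)
    (fun _ _ h => Nat.add_le_add_right (List.monotone_count_take p.1 false h) 1)
    (List.count_take_add_one_le p.2 false) (by simp) (n := p.1.length)
    (by simp [List.take_of_length_le, hlen, hp.1.1, hp.2.1]; omega)
  exact ⟨k, hk, hmeet⟩

def swapAt (k : ℕ) (p : List Bool × List Bool) : List Bool × List Bool :=
  (p.1.take k ++ p.2.drop k, p.2.take k ++ p.1.drop k)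

open Classical in
noncomputable def tailSwap (p : List Bool × List Bool) : List Bool × List Bool :=
  if h : Meets p then swapAt (Nat.find h) p else p

theorem take_swapAt_fst {k j : ℕ} {p : List Bool × List Bool} (hj : j ≤ k)
    (hk : k ≤ p.1.length) : (swapAt k p).1.take j = p.1.take j := by
  rw [swapAt, List.take_append_of_le_length (by simp; omega), List.take_take, min_eq_left hj]

theorem take_swapAt_snd {k j : ℕ} {p : List Bool × List Bool} (hj : j ≤ k)
    (hk : k ≤ p.2.length) : (swapAt k p).2.take j = p.2.take j := by
  rw [swapAt, List.take_append_of_le_length (by simp; omega), List.take_take, min_eq_left hj]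

theorem swapAt_swapAt {k : ℕ} {p : List Bool × List Bool} (h₁ : k ≤ p.1.length)
    (h₂ : k ≤ p.2.length) : swapAt k (swapAt k p) = p := by
  simp [swapAt, h₁, h₂]

theorem meetsAt_swapAt_iff {k j : ℕ} {p : List Bool × List Bool}
    (hlen : p.1.length = p.2.length) (hk : k ≤ p.1.length) (hj : j ≤ k) :
    MeetsAt (swapAt k p) j ↔ MeetsAt p j := by
  have hlen' : (swapAt k p).1.length = p.1.length := by simp [swapAt]; omega
  rw [MeetsAt, MeetsAt, hlen', take_swapAt_fst hj hk, take_swapAt_snd hj (hlen ▸ hk)]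

theorem tailSwap_of_meets {p : List Bool × List Bool} (h : Meets p) :
    tailSwap p = swapAt (Nat.find h) p := by
  rw [tailSwap, dif_pos h]

/-- The swap does not change the paths before the first meeting, so that meeting stays the
first one and swapping again undoes it. -/
theorem Meets.tailSwap {p : List Bool × List Bool} (h : Meets p)
    (hlen : p.1.length = p.2.length) :
    Meets (tailSwap p) ∧ tailSwap (tailSwap p) = p := by
  have hk := (Nat.find_spec h).1
  have hfind : ∀ j ≤ Nat.find h, MeetsAt p j ↔ MeetsAt (swapAt (Nat.find h) p) j :=
    fun j hj => (meetsAt_swapAt_iff hlen hk hj).symm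
  have h' : Meets (swapAt (Nat.find h) p) := ⟨_, (hfind _ le_rfl).1 (Nat.find_spec h)⟩
  rw [tailSwap_of_meets h, tailSwap_of_meets h', ← Nat.find_congr (Nat.find_spec h) hfind]
  exact ⟨h', swapAt_swapAt hk (hlen ▸ hk)⟩

/-- Intersecting pairs of a path from `(1,0)` to `(a₁+1, b₁+1)` and a path from `(0,1)` to
`(a₂+1, b₂+1)`. -/
def meetingPairs (a₁ b₁ a₂ b₂ : ℕ) : Set (List Bool × List Bool) :=
  paths a₁ (b₁ + 1) ×ˢ paths (a₂ + 1) b₂ ∩ {p | Meets p}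

theorem swapAt_mem_paths_prod {a₁ b₁ a₂ b₂ k : ℕ} {p : List Bool × List Bool}
    (hp : p ∈ paths a₁ (b₁ + 1) ×ˢ paths (a₂ + 1) b₂) (hab : a₁ + b₁ = a₂ + b₂)
    (hk : MeetsAt p k) : swapAt k p ∈ paths a₂ (b₂ + 1) ×ˢ paths (a₁ + 1) b₁ := by
  have := hk.2
  have := hk.count_true (length_eq_length_of_mem_paths_prod hp (by omega))
  have := List.count_take_add_count_drop p.1 false k
  have := List.count_take_add_count_drop p.1 true k
  have := List.count_take_add_count_drop p.2 false k
  have := List.count_take_add_count_drop p.2 true k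
  obtain ⟨⟨hs₁, hs₂⟩, ⟨ht₁, ht₂⟩⟩ := hp
  simp only [swapAt, Set.mem_prod, paths, Set.mem_ofPred_eq, List.count_append]
  omega

theorem mapsTo_tailSwap_meetingPairs {a₁ b₁ a₂ b₂ : ℕ} (hab : a₁ + b₁ = a₂ + b₂) :
    Set.MapsTo tailSwap (meetingPairs a₁ b₁ a₂ b₂) (meetingPairs a₂ b₂ a₁ b₁) := by
  rintro p ⟨hp, hm : Meets p⟩
  refine ⟨?_, (hm.tailSwap (length_eq_length_of_mem_paths_prod hp (by omega))).1⟩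
  rw [tailSwap_of_meets hm]
  exact swapAt_mem_paths_prod hp hab (Nat.find_spec hm)

theorem leftInvOn_tailSwap_meetingPairs {a₁ b₁ a₂ b₂ : ℕ} (hab : a₁ + b₁ = a₂ + b₂) :
    Set.LeftInvOn tailSwap tailSwap (meetingPairs a₁ b₁ a₂ b₂) := by
  rintro p ⟨hp, hm : Meets p⟩
  exact (hm.tailSwap (length_eq_length_of_mem_paths_prod hp (by omega))).2

theorem ncard_meetingPairs_comm {a₁ b₁ a₂ b₂ : ℕ} (hab : a₁ + b₁ = a₂ + b₂) :
    (meetingPairs a₁ b₁ a₂ b₂).ncard = (meetingPairs a₂ b₂ a₁ b₁).ncard :=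
  Set.BijOn.ncard_eq <| Set.InvOn.bijOn
    ⟨leftInvOn_tailSwap_meetingPairs hab, leftInvOn_tailSwap_meetingPairs hab.symm⟩
    (mapsTo_tailSwap_meetingPairs hab) (mapsTo_tailSwap_meetingPairs hab.symm)

theorem ncard_meets (a b : ℕ) :
    (paths a b ×ˢ paths a b ∩ {p | Meets p}).ncard =
      (a + b).choose (b + 1) * (a + b).choose (a + 1) := by
  by_cases hdeg : a = 0 ∨ b = 0
  · have hempty : paths a b ×ˢ paths a b ∩ {p | Meets p} = ∅ := by
      refine Set.eq_empty_of_forall_notMem fun p ⟨hp, hm⟩ => ?_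
      have := Meets.one_le_count hm (length_eq_length_of_mem_paths_prod hp rfl)
      have := hp.1.2
      have := hp.2.1
      omega
    rw [hempty, Set.ncard_empty]
    rcases hdeg with rfl | rfl
    · rw [Nat.choose_eq_zero_of_lt (by omega), zero_mul]
    · rw [Nat.choose_eq_zero_of_lt (k := a + 1) (by omega), mul_zero]
  obtain ⟨A, rfl⟩ : ∃ A, a = A + 1 := ⟨a - 1, by omega⟩
  obtain ⟨B, rfl⟩ : ∃ B, b = B + 1 := ⟨b - 1, by omega⟩
  have hall : meetingPairs A (B + 1) (A + 1) B = paths A (B + 2) ×ˢ paths (A + 2) B :=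
    Set.inter_eq_left.2 fun p hp => meets_of_mem_paths_prod hp (by omega) (by omega)
  rw [show paths (A + 1) (B + 1) ×ˢ paths (A + 1) (B + 1) ∩ {p | Meets p} =
      meetingPairs (A + 1) B A (B + 1) from rfl, ncard_meetingPairs_comm (by omega), hall,
    Set.ncard_prod, ncard_paths, ncard_paths,
    Nat.choose_symm_of_eq_add (show A + 1 + (B + 1) = (A + 2) + B by omega)]
  congr 2 <;> omega

theorem nonIntersecting_eq (a b : ℕ) :
    {p : List Bool × List Bool |
        p.1.count false = a ∧ p.1.count true = b ∧
        p.2.count false = a ∧ p.2.count true = b ∧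
        ∀ pt : ℕ × ℕ, pt ∈ stepPoints (1, 0) p.1 → pt ∉ stepPoints (0, 1) p.2} =
      paths a b ×ˢ paths a b \ {p | Meets p} := by
  ext p
  simp only [paths, Set.mem_sdiff, Set.mem_prod, Set.mem_ofPred_eq, and_assoc]
  refine and_congr_right fun h₁ => and_congr_right fun h₂ => and_congr_right fun h₃ =>
    and_congr_right fun h₄ => ?_
  rw [← exists_mem_stepPoints_iff_meets (length_eq_length_of_mem_paths_prod
    (a₁ := a) (b₁ := b) ⟨⟨h₁, h₂⟩, ⟨h₃, h₄⟩⟩ rfl)]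
  simp

theorem ncard_nonIntersecting (a b : ℕ) :
    ((paths a b ×ˢ paths a b \ {p | Meets p}).ncard : ℚ) =
      ((a + b).choose b : ℚ) ^ 2 - (a + b).choose (b + 1) * (a + b).choose (a + 1) := by
  have h := Set.ncard_inter_add_ncard_sdiff_eq_ncard (paths a b ×ˢ paths a b) {p | Meets p}
    ((paths_finite a b).prod (paths_finite a b))
  rw [ncard_meets, Set.ncard_prod, ncard_paths] at h
  rw [eq_sub_iff_add_eq', sq]
  exact_mod_cast h

end LatticePath

theorem Nat.choose_sq_sub_choose_mul_choose {K : Type*} [Field K] [CharZero K] (a b : ℕ) :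
    ((a + b).choose b : K) ^ 2 - (a + b).choose (b + 1) * (a + b).choose (a + 1) =
      1 / ((a + b + 1 : ℕ) : K) * (a + b + 1).choose a * (a + b + 1).choose b := by
  have h₁ := Nat.choose_succ_right_eq (a + b) b
  have h₂ := Nat.choose_succ_right_eq (a + b) a
  have h₃ := Nat.add_one_mul_choose_eq (a + b) b
  have h₄ := Nat.add_one_mul_choose_eq (a + b) a
  rw [Nat.add_sub_cancel] at h₁
  rw [Nat.add_sub_cancel_left, Nat.choose_symm_add] at h₂
  rw [Nat.choose_symm_of_eq_add (show a + b + 1 = (b + 1) + a by omega)] at h₃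
  rw [Nat.choose_symm_add,
    Nat.choose_symm_of_eq_add (show a + b + 1 = (a + 1) + b by omega)] at h₄
  have hX : ((a + b).choose (b + 1) : K) = (a + b).choose b * a / (b + 1) := by
    rw [eq_div_iff b.cast_add_one_ne_zero]; exact_mod_cast h₁
  have hY : ((a + b).choose (a + 1) : K) = (a + b).choose b * b / (a + 1) := by
    rw [eq_div_iff a.cast_add_one_ne_zero]; exact_mod_cast h₂
  have hU : ((a + b + 1).choose a : K) = (a + b + 1) * (a + b).choose b / (b + 1) := by
    rw [eq_div_iff b.cast_add_one_ne_zero]; exact_mod_cast h₃.symm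
  have hV : ((a + b + 1).choose b : K) = (a + b + 1) * (a + b).choose b / (a + 1) := by
    rw [eq_div_iff a.cast_add_one_ne_zero]; exact_mod_cast h₄.symm
  rw [hX, hY, hU, hV]
  push_cast
  field_simp
  ring

/-- For `p, q ≥ 1`, the number of pairs of non-intersecting monotone lattice paths,
one from `(1,0)` to `(p, q−1)` and one from `(0,1)` to `(p−1, q)` (sharing no lattice
point), equals `C(p+q−2, q−1)² − C(p+q−2, q)·C(p+q−2, p)`, which equals
`(1/(p+q−1))·C(p+q−1, p−1)·C(p+q−1, q−1)`. -/
theorem stmt19 (p q : ℕ) (hp : 1 ≤ p) (hq : 1 ≤ q) :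
    (({sp : List Bool × List Bool |
          sp.1.count false = p - 1 ∧ sp.1.count true = q - 1 ∧
          sp.2.count false = p - 1 ∧ sp.2.count true = q - 1 ∧
          ∀ pt : ℕ × ℕ, pt ∈ stepPoints (1, 0) sp.1 → pt ∉ stepPoints (0, 1) sp.2}.ncard : ℚ))
        = (((p + q - 2).choose (q - 1) : ℚ)) ^ 2
            - ((p + q - 2).choose q) * ((p + q - 2).choose p) ∧
      (({sp : List Bool × List Bool |
          sp.1.count false = p - 1 ∧ sp.1.count true = q - 1 ∧
          sp.2.count false = p - 1 ∧ sp.2.count true = q - 1 ∧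
          ∀ pt : ℕ × ℕ, pt ∈ stepPoints (1, 0) sp.1 → pt ∉ stepPoints (0, 1) sp.2}.ncard : ℚ))
        = (1 / ((p + q - 1 : ℕ) : ℚ)) * ((p + q - 1).choose (p - 1))
            * ((p + q - 1).choose (q - 1)) := by
  obtain ⟨a, rfl⟩ : ∃ a, p = a + 1 := ⟨p - 1, by omega⟩
  obtain ⟨b, rfl⟩ : ∃ b, q = b + 1 := ⟨q - 1, by omega⟩
  simp only [Nat.add_sub_cancel, show a + 1 + (b + 1) - 2 = a + b by omega,
    show a + 1 + (b + 1) - 1 = a + b + 1 by omega]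
  rw [LatticePath.nonIntersecting_eq, LatticePath.ncard_nonIntersecting]
  exact ⟨rfl, Nat.choose_sq_sub_choose_mul_choose a b⟩
end
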